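/- arXiv:1907.11573 — 3 statements merged into one kernel-verified Lean document; each statement's English description precedes it below -/
import Mathlib

section
/- Let L be a nonempty language. Then either L has a greatest element with respect to <_ℓ, or there exists an ω-word w such that: (i) u <_ℓ w for every u ∈ L; (ii) for every ω-word w', if u <_ℓ w' for all u ∈ L, then w ≤_ℓ w'; and (iii) for every word v, if (u = v or u <_ℓ v) for all u ∈ L, then w <_ℓ v. (Thus every language has a least upper bound in Σ* ∪ Σ^ω; this is the key step in the lemma that Σ* ∪ Σ^ω ordered lexicographically is a complete lattice.) -/
variable {α : Type*} [Fintype α] [LinearOrder α] [Nonempty α]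

/-- `w↾n`, the length-`n` prefix of the ω-word `w`. -/
def restrict (w : ℕ → α) (n : ℕ) : List α := List.ofFn (fun i : Fin n => w i)

/-- `w` is a limit of `L`: every finite prefix of `w` is a proper prefix of some word of `L`. -/
def blim (L : Set (List α)) : Set (ℕ → α) :=
  {w | ∀ n : ℕ, ∃ u ∈ L, restrict w n <+: u ∧ restrict w n ≠ u}

/-- `u <_ℓ w` for a word `u` and an ω-word `w`. -/
def wordLtOmega (u : List α) (w : ℕ → α) : Prop :=
  u = restrict w u.length ∨
    ∃ (i : ℕ) (h : i < u.length), u.take i = restrict w i ∧ u.get ⟨i, h⟩ < w i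

/-- `w <_ℓ u` for an ω-word `w` and a word `u`. -/
def omegaLtWord (w : ℕ → α) (u : List α) : Prop :=
  ∃ (i : ℕ) (h : i < u.length), u.take i = restrict w i ∧ w i < u.get ⟨i, h⟩

/-- `w <_ℓ w'` for ω-words. -/
def omegaLt (w w' : ℕ → α) : Prop :=
  ∃ n : ℕ, (∀ i < n, w i = w' i) ∧ w n < w' n

/-- `w ≤_ℓ w'` for ω-words. -/
def omegaLe (w w' : ℕ → α) : Prop := w = w' ∨ omegaLt w w'

/-- Concatenation `u·w` of a finite word and an ω-word. -/
def ocat (u : List α) (w : ℕ → α) : ℕ → α :=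
  fun i => if h : i < u.length then u.get ⟨i, h⟩ else w (i - u.length)

/-- The strict order `u <_s v` on words. -/
def strictLt (u v : List α) : Prop :=
  ∃ (x y z : List α) (a b : α), a < b ∧ u = x ++ a :: y ∧ v = x ++ b :: z

/-- `v^ω` for a nonempty word `v`. -/
def wpow (v : List α) (hv : v ≠ []) : ℕ → α :=
  fun i => v.get ⟨i % v.length, Nat.mod_lt _ (List.length_pos_iff.mpr hv)⟩

/-- `u^n`, the `n`-fold concatenation of the word `u` with itself. -/
def npow (u : List α) (n : ℕ) : List α := (List.replicate n u).flatten

set_option linter.unusedSectionVars false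

-- helper lemmas (to be pasted above the theorem)

lemma aux_lex_of_prefix {u v : List α} (h : u <+: v) (hne : u ≠ v) :
    List.Lex (· < ·) u v := by
  obtain ⟨t, rfl⟩ := h
  induction u with
  | nil =>
    cases t with
    | nil => simp at hne
    | cons a t => exact List.Lex.nil
  | cons a u ih => exact List.Lex.cons (ih (by simpa using hne))

lemma aux_lex_of_take_get : ∀ {u v : List α} {i : ℕ} (h : i < u.length) (h' : i < v.length),
    u.take i = v.take i → u.get ⟨i, h⟩ < v.get ⟨i, h'⟩ → List.Lex (· < ·) u v := by
  intro u v i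
  induction i generalizing u v with
  | zero =>
    intro h h' _ hg
    match u, v with
    | a :: u', b :: v' => exact List.Lex.rel hg
  | succ i ih =>
    intro h h' ht hg
    match u, v with
    | a :: u', b :: v' =>
      simp only [List.take_succ_cons, List.cons.injEq] at ht
      obtain ⟨rfl, ht⟩ := ht
      exact List.Lex.cons (ih (Nat.lt_of_succ_lt_succ h) (Nat.lt_of_succ_lt_succ h') ht hg)

lemma aux_lex_elim {u v : List α} (h : List.Lex (· < ·) u v) :
    (u <+: v ∧ u ≠ v) ∨ ∃ (i : ℕ) (h1 : i < u.length) (h2 : i < v.length),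
      u.take i = v.take i ∧ u.get ⟨i, h1⟩ < v.get ⟨i, h2⟩ := by
  induction h with
  | nil => exact Or.inl ⟨List.nil_prefix, by simp⟩
  | @cons a l1 l2 _ ih =>
    rcases ih with ⟨hp, hne⟩ | ⟨i, h1, h2, ht, hg⟩
    · exact Or.inl ⟨List.cons_prefix_cons.mpr ⟨rfl, hp⟩, by simpa using hne⟩
    · exact Or.inr ⟨i + 1, Nat.succ_lt_succ h1, Nat.succ_lt_succ h2, by simpa using ht, hg⟩
  | @rel a l1 b l2 h => exact Or.inr ⟨0, by simp, by simp, rfl, h⟩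

lemma aux_lex_asymm {u v : List α} (h : List.Lex (· < ·) u v)
    (h' : List.Lex (· < ·) v u) : False :=
  asymm h h'

lemma aux_restrict_length (w : ℕ → α) (n : ℕ) : (restrict w n).length = n := by
  simp [restrict]

lemma aux_restrict_succ (w : ℕ → α) (n : ℕ) :
    restrict w (n + 1) = restrict w n ++ [w n] := by
  show List.ofFn _ = _
  rw [List.ofFn_succ']
  simp [restrict, List.concat_eq_append]

lemma aux_exists_greatest {Q : α → Prop} (h : ∃ a, Q a) :
    ∃ b, Q b ∧ ∀ a, Q a → a ≤ b := by
  classical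
  obtain ⟨a, ha⟩ := h
  have hne : (Finset.univ.filter Q).Nonempty := ⟨a, by simp [ha]⟩
  refine ⟨(Finset.univ.filter Q).max' hne, ?_, ?_⟩
  · have := Finset.max'_mem _ hne
    simpa using this
  · intro a' ha'
    exact Finset.le_max' _ _ (by simp [ha'])

open Classical in
noncomputable def aux_best (L : Set (List α)) (s : List α) : α :=
  if h : ∃ a : α, ∃ u ∈ L, s ++ [a] <+: u then (aux_exists_greatest h).choose
  else Classical.arbitrary α

lemma aux_best_spec {L : Set (List α)} {s : List α}
    (h : ∃ a : α, ∃ u ∈ L, s ++ [a] <+: u) :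
    (∃ u ∈ L, s ++ [aux_best L s] <+: u) ∧
      ∀ a : α, (∃ u ∈ L, s ++ [a] <+: u) → a ≤ aux_best L s := by
  rw [aux_best, dif_pos h]
  exact (aux_exists_greatest h).choose_spec

noncomputable def aux_pre (L : Set (List α)) : ℕ → List α
  | 0 => []
  | n + 1 => aux_pre L n ++ [aux_best L (aux_pre L n)]

noncomputable def aux_w (L : Set (List α)) : ℕ → α := fun n => aux_best L (aux_pre L n)

lemma aux_pre_succ (L : Set (List α)) (n : ℕ) :
    aux_pre L (n + 1) = aux_pre L n ++ [aux_w L n] := rfl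

lemma aux_pre_length (L : Set (List α)) (n : ℕ) : (aux_pre L n).length = n := by
  induction n with
  | zero => rfl
  | succ n ih => simp [aux_pre_succ, ih]

lemma aux_pre_eq (L : Set (List α)) (n : ℕ) : aux_pre L n = restrict (aux_w L) n := by
  induction n with
  | zero => simp [aux_pre, restrict]
  | succ n ih => rw [aux_pre_succ, aux_restrict_succ, ih]

lemma aux_pre_take (L : Set (List α)) {i n : ℕ} (h : i ≤ n) :
    (aux_pre L n).take i = aux_pre L i := by
  induction n with
  | zero => interval_cases i; rfl
  | succ n ih =>
    rcases Nat.lt_or_ge i (n + 1) with h' | h'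
    · rw [aux_pre_succ, List.take_append_of_le_length (by rw [aux_pre_length]; omega),
        ih (by omega)]
    · have : i = n + 1 := le_antisymm h h'
      subst this
      exact List.take_of_length_le (by rw [aux_pre_length])

lemma aux_pre_get (L : Set (List α)) {i n : ℕ} (h : i < n)
    (h' : i < (aux_pre L n).length) : (aux_pre L n).get ⟨i, h'⟩ = aux_w L i := by
  rw [List.get_of_eq (aux_pre_eq L n) ⟨i, h'⟩]
  simp [restrict]

lemma aux_take_of_prefix {u v : List α} (h : u <+: v) {i : ℕ} (hi : i ≤ u.length) :
    v.take i = u.take i := by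
  obtain ⟨t, rfl⟩ := h
  exact List.take_append_of_le_length hi

lemma aux_get_of_prefix {u v : List α} (h : u <+: v) {i : ℕ} (hi : i < u.length)
    (hi' : i < v.length) : v.get ⟨i, hi'⟩ = u.get ⟨i, hi⟩ := by
  obtain ⟨t, rfl⟩ := h
  simp [List.getElem_append_left hi]

/-- every nonempty language either has a greatest element w.r.t. `<_ℓ`,
or has a least upper bound among ω-words which is also below every finite upper bound. -/
theorem stmt0 (L : Set (List α)) (hL : L.Nonempty) :
    (∃ m ∈ L, ∀ u ∈ L, u = m ∨ List.Lex (· < ·) u m) ∨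
    ∃ w : ℕ → α,
      (∀ u ∈ L, wordLtOmega u w) ∧
      (∀ w' : ℕ → α, (∀ u ∈ L, wordLtOmega u w') → omegaLe w w') ∧
      (∀ v : List α, (∀ u ∈ L, u = v ∨ List.Lex (· < ·) u v) → omegaLtWord w v) := by
  by_cases hmax : ∃ m ∈ L, ∀ u ∈ L, u = m ∨ List.Lex (· < ·) u m
  · exact Or.inl hmax
  right
  push_neg at hmax
  -- every element of L has a strictly bigger element
  have hstep : ∀ m ∈ L, ∃ u ∈ L, List.Lex (· < ·) m u := by
    intro m hm
    obtain ⟨u, hu, hne, hnl⟩ := hmax m hm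
    haveI : IsTrichotomous α (· < ·) := ⟨fun a b h1 h2 => ((lt_trichotomy a b).resolve_left h1).resolve_right h2⟩
    rcases trichotomous_of (List.Lex (· < ·)) u m with h | h | h
    · exact absurd h hnl
    · exact absurd h hne
    · exact ⟨u, hu, h⟩
  -- maximality of the greedy choice
  have hcmp : ∀ u ∈ L, ∀ i (h : i < u.length), u.take i = aux_pre L i →
      u.get ⟨i, h⟩ ≤ aux_w L i := by
    intro u hu i h ht
    have hw : aux_pre L i ++ [u.get ⟨i, h⟩] <+: u := by
      rw [← ht]
      rw [← List.concat_eq_append, List.get_eq_getElem, List.take_concat_get]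
      exact List.take_prefix _ _
    exact (aux_best_spec ⟨_, u, hu, hw⟩).2 _ ⟨u, hu, hw⟩
  -- Lemma B: every word of L agrees with the greedy word or is lex-below it
  have hB : ∀ u ∈ L, ∀ n : ℕ, u.take n = aux_pre L n ∨ List.Lex (· < ·) u (aux_pre L n) := by
    intro u hu n
    induction n with
    | zero => left; rfl
    | succ n ih =>
      rcases ih with ht | hl
      · rcases Nat.lt_or_ge n u.length with hlen | hlen
        · have hle := hcmp u hu n hlen ht
          rcases lt_or_eq_of_le hle with hlt | heq
          · right
            refine aux_lex_of_take_get hlen (by rw [aux_pre_length]; omega) ?_ ?_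
            · rw [ht, aux_pre_take L (Nat.le_succ n)]
            · rw [aux_pre_get L (Nat.lt_succ_self n)]; exact hlt
          · left
            rw [aux_pre_succ, ← heq, ← ht, ← List.concat_eq_append,
              List.get_eq_getElem, List.take_concat_get]
        · have huq : u = aux_pre L n := by rw [← ht, List.take_of_length_le hlen]
          right
          rw [aux_pre_succ, huq]
          exact aux_lex_of_prefix ⟨[aux_w L n], rfl⟩ (by simp)
      · right
        rw [aux_pre_succ]
        exact List.Lex.append_right _ _ hl
  -- extraction: proper-prefix invariant gives a letter extending the prefix
  have hext : ∀ n : ℕ, (∃ u ∈ L, aux_pre L n <+: u ∧ aux_pre L n ≠ u) →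
      ∃ a : α, ∃ u ∈ L, aux_pre L n ++ [a] <+: u := by
    intro n ⟨u, hu, ⟨t, htt⟩, hne⟩
    have htne : t ≠ [] := by rintro rfl; rw [List.append_nil] at htt; exact hne htt
    obtain ⟨a, t', rfl⟩ := List.exists_cons_of_ne_nil htne
    exact ⟨a, u, hu, ⟨t', by rw [← htt]; simp⟩⟩
  -- the invariant
  have hInv : ∀ n : ℕ, ∃ u ∈ L, aux_pre L n <+: u ∧ aux_pre L n ≠ u := by
    intro n
    induction n with
    | zero =>
      obtain ⟨u0, hu0⟩ := hL
      by_cases h0 : u0 = []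
      · obtain ⟨u1, hu1, hlex⟩ := hstep u0 hu0
        subst h0
        refine ⟨u1, hu1, List.nil_prefix, ?_⟩
        intro h
        rw [show aux_pre L 0 = [] from rfl] at h
        rw [← h] at hlex
        cases hlex
      · exact ⟨u0, hu0, List.nil_prefix, fun h => h0 (by rw [← h]; rfl)⟩
    | succ n ih =>
      obtain ⟨uc, huc, hpc⟩ := (aux_best_spec (hext n ih)).1
      have hpc' : aux_pre L (n + 1) <+: uc := by rw [aux_pre_succ]; exact hpc
      by_cases hce : aux_pre L (n + 1) = uc
      · obtain ⟨u'', hu'', hlex⟩ := hstep uc huc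
        rcases hB u'' hu'' (n + 1) with ht2 | hl2
        · refine ⟨u'', hu'', ?_, ?_⟩
          · rw [← ht2]; exact List.take_prefix _ _
          · intro heq
            have : uc = u'' := hce.symm.trans heq
            rw [this] at hlex
            exact aux_lex_asymm hlex hlex
        · rw [← hce] at hlex
          exact absurd hl2 (fun h => aux_lex_asymm hlex h)
      · exact ⟨uc, huc, hpc', hce⟩
  have hwit : ∀ n : ℕ, ∃ u ∈ L, aux_pre L (n + 1) <+: u := by
    intro n
    obtain ⟨uc, huc, hpc⟩ := (aux_best_spec (hext n (hInv n))).1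
    exact ⟨uc, huc, by rw [aux_pre_succ]; exact hpc⟩
  refine ⟨aux_w L, ?_, ?_, ?_⟩
  · -- (i) upper bound
    intro u hu
    rcases hB u hu u.length with ht | hl
    · left
      rw [← aux_pre_eq, ← ht, List.take_length]
    · right
      rcases aux_lex_elim hl with ⟨hp, hne⟩ | ⟨i, h1, h2, ht, hg⟩
      · exact absurd (List.IsPrefix.eq_of_length hp (by rw [aux_pre_length])) hne
      · refine ⟨i, h1, ?_, ?_⟩
        · rw [ht, aux_pre_take L (by rw [aux_pre_length] at h2; omega), aux_pre_eq]
        · rw [aux_pre_get L (by rwa [aux_pre_length] at h2)] at hg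
          exact hg
  · -- (ii) least among ω-word upper bounds
    intro w' hub
    by_cases hww : aux_w L = w'
    · exact Or.inl hww
    right
    have hdiff : ∃ n, aux_w L n ≠ w' n := by
      by_contra h
      push_neg at h
      exact hww (funext h)
    set n := Nat.find hdiff with hn
    have hne : aux_w L n ≠ w' n := Nat.find_spec hdiff
    have hagree : ∀ i < n, aux_w L i = w' i := by
      intro i hi
      have := Nat.find_min hdiff hi
      simpa using this
    refine ⟨n, hagree, ?_⟩
    rcases hne.lt_or_gt with h | h
    · exact h
    · exfalso
      obtain ⟨u, hu, hpre⟩ := hwit n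
      have hlen : n < u.length := by
        have := hpre.length_le
        rw [aux_pre_length] at this
        omega
      have htk : u.take n = aux_pre L n := by
        rw [aux_take_of_prefix hpre (by rw [aux_pre_length]; omega),
          aux_pre_take L (Nat.le_succ n)]
      have hgt : u.get ⟨n, hlen⟩ = aux_w L n := by
        rw [aux_get_of_prefix hpre (by rw [aux_pre_length]; omega),
          aux_pre_get L (Nat.lt_succ_self n)]
      have hrn : restrict w' n = aux_pre L n := by
        rw [aux_pre_eq]
        unfold restrict
        congr 1
        exact funext fun i => (hagree i i.2).symm
      rcases hub u hu with hEq | ⟨i, hi, hti, hgi⟩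
      · have h2 : u.get ⟨n, hlen⟩ = w' n := by
          rw [List.get_of_eq hEq ⟨n, hlen⟩]
          simp [restrict]
        rw [hgt] at h2
        exact absurd h2 (ne_of_gt h)
      · rcases lt_trichotomy i n with hin | rfl | hni
        · have hgi' : u.get ⟨i, hi⟩ = aux_w L i := by
            rw [aux_get_of_prefix hpre (by rw [aux_pre_length]; omega),
              aux_pre_get L (by omega)]
          rw [hgi', hagree i hin] at hgi
          exact lt_irrefl _ hgi
        · rw [hgt] at hgi
          exact lt_asymm h hgi
        · have h3 : (u.take i).get ⟨n, by rw [List.length_take]; omega⟩ =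
              (restrict w' i).get ⟨n, by rw [aux_restrict_length]; omega⟩ :=
            List.get_of_eq hti _
          simp only [List.get_eq_getElem, List.getElem_take, restrict,
            List.getElem_ofFn] at h3
          have h4 : u[n]'hlen = aux_w L n := hgt
          rw [show u[n]'(by omega) = u[n]'hlen from rfl, h4] at h3
          exact hne h3
  · -- (iii) below every finite upper bound
    intro v hvub
    by_cases hv : v = aux_pre L v.length
    · exfalso
      obtain ⟨u, hu, hp, hne⟩ := hInv v.length
      rw [← hv] at hp hne
      rcases hvub u hu with rfl | hlx
      · exact hne rfl
      · exact aux_lex_asymm (aux_lex_of_prefix hp hne) hlx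
    · have hD : ∃ i, v.take i ≠ aux_pre L i := ⟨v.length, by rwa [List.take_length]⟩
      have hm : v.take (Nat.find hD) ≠ aux_pre L (Nat.find hD) := Nat.find_spec hD
      have hm0 : Nat.find hD ≠ 0 := by
        intro h
        apply hm
        rw [h]
        rfl
      obtain ⟨i, hieq⟩ : ∃ i, Nat.find hD = i + 1 :=
        ⟨Nat.find hD - 1, (Nat.succ_pred_eq_of_ne_zero hm0).symm⟩
      have hti : v.take i = aux_pre L i := by
        have := Nat.find_min hD (show i < Nat.find hD by omega)
        simpa using this
      have hilen : i < v.length := by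
        by_contra hc
        push_neg at hc
        apply hv
        have hveq : v = aux_pre L i := by rw [← hti, List.take_of_length_le hc]
        have hvl : v.length = i := by rw [hveq, aux_pre_length]
        rw [hvl]
        exact hveq
      rw [hieq] at hm
      have hgi : v.get ⟨i, hilen⟩ ≠ aux_w L i := by
        intro hcc
        apply hm
        have hcc' : v[i]'hilen = aux_w L i := by simpa using hcc
        rw [← List.take_concat_get hilen, List.concat_eq_append, hti, hcc',
          ← aux_pre_succ]
      rcases hgi.lt_or_gt with h | h
      · exfalso
        obtain ⟨u, hu, hpre⟩ := hwit i
        have hlen : i < u.length := by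
          have := hpre.length_le
          rw [aux_pre_length] at this
          omega
        have hut : u.take i = aux_pre L i := by
          rw [aux_take_of_prefix hpre (by rw [aux_pre_length]; omega),
            aux_pre_take L (Nat.le_succ i)]
        have hug : u.get ⟨i, hlen⟩ = aux_w L i := by
          rw [aux_get_of_prefix hpre (by rw [aux_pre_length]; omega),
            aux_pre_get L (Nat.lt_succ_self i)]
        have hlx : List.Lex (· < ·) v u :=
          aux_lex_of_take_get hilen hlen (hti.trans hut.symm) (by rw [hug]; exact h)
        rcases hvub u hu with rfl | hl
        · exact aux_lex_asymm hlx hlx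
        · exact aux_lex_asymm hlx hl
      · exact ⟨i, hilen, by rw [hti, aux_pre_eq], h⟩
end

section
/- Let G : ContextFreeGrammar α and X : G.NT. Suppose there exist words u1, u2, u3 : List α and a sentential form β such that G.Derives [Symbol.nonterminal X] ((u1.map Symbol.terminal) ++ [Symbol.nonterminal X] ++ (u2.map Symbol.terminal) ++ β ++ (u3.map Symbol.terminal)), the language L(β) is infinite, and there exist words u, v ∈ L(X) with u <_s v (so L(X) is not a prefix chain). Then L(X) has at least two distinct limits. -/
variable {α : Type*} [Fintype α] [LinearOrder α] [Nonempty α]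

section Aux
set_option linter.unusedSectionVars false

lemma konig' (L : Set (List α)) (hL : L.Infinite) : ∃ w : ℕ → α, w ∈ blim L := by
  classical
  set S : List α → Set (List α) := fun p => {x ∈ L | p <+: x} with hS
  have h0 : (S []).Infinite := by
    have : S [] = L := by ext x; simp [hS]
    rwa [this]
  have step : ∀ p : List α, (S p).Infinite → ∃ c : α, (S (p ++ [c])).Infinite := by
    intro p hp
    by_contra hcon
    push_neg at hcon
    have hsub : S p ⊆ insert p (⋃ c : α, S (p ++ [c])) := by
      intro x ⟨hxL, hpre⟩
      rcases eq_or_ne x p with rfl | hne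
      · exact Set.mem_insert _ _
      · obtain ⟨t, ht⟩ := hpre
        have htne : t ≠ [] := by rintro rfl; simp at ht; exact hne ht.symm
        refine Set.mem_insert_of_mem _ (Set.mem_iUnion.2 ⟨t.head htne, hxL, ?_⟩)
        exact ⟨t.tail, by simp [← ht]⟩
    exact hp ((((Set.finite_iUnion hcon).insert p)).subset hsub)
  let p : ℕ → List α := fun n =>
    Nat.rec [] (fun _ q => if h : (S q).Infinite then q ++ [(step q h).choose] else []) n
  have hinf : ∀ n, (S (p n)).Infinite := by
    intro n
    induction n with
    | zero => exact h0
    | succ n ih =>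
      show (S (if h : (S (p n)).Infinite then _ else [])).Infinite
      rw [dif_pos ih]
      exact (step (p n) ih).choose_spec
  have hsucc : ∀ n, p (n + 1) = p n ++ [(step (p n) (hinf n)).choose] := by
    intro n
    show (if h : (S (p n)).Infinite then _ else []) = _
    rw [dif_pos (hinf n)]
  have hlen : ∀ n, (p n).length = n := by
    intro n
    induction n with
    | zero => rfl
    | succ n ih => rw [hsucc n]; simp [ih]
  let w : ℕ → α := fun n => (p (n + 1)).getD n (Classical.arbitrary α)
  have hres : ∀ n, restrict w n = p n := by
    intro n
    induction n with
    | zero => rfl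
    | succ n ih =>
      have : restrict w (n + 1) = restrict w n ++ [w n] := by
        rw [restrict, List.ofFn_succ', List.concat_eq_append]
        simp [restrict]
      rw [this, ih, hsucc n]
      congr 1
      show [(p (n+1)).getD n _] = _
      rw [hsucc n]
      simp [List.getD_append_right, hlen n]
  refine ⟨w, fun n => ?_⟩
  obtain ⟨x, hx, hne⟩ := (hinf n).exists_notMem_finite (Set.finite_singleton (p n))
  simp only [Set.mem_singleton_iff] at hne
  exact ⟨x, hx.1, by rw [hres n]; exact ⟨hx.2, fun h => hne h.symm⟩⟩

lemma blim_mono' {L L' : Set (List α)} (h : L ⊆ L') : blim L ⊆ blim L' := by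
  intro w hw n
  obtain ⟨x, hx, h2⟩ := hw n
  exact ⟨x, h hx, h2⟩

lemma restrict_getD' (w : ℕ → α) {n i : ℕ} (h : i < n) (d : α) :
    (restrict w n).getD i d = w i := by
  rw [List.getD_eq_getElem]
  · simp [restrict]
  · simpa [restrict] using h

lemma blim_prefix' {L : Set (List α)} {q : List α} (hq : ∀ x ∈ L, q <+: x)
    {w : ℕ → α} (hw : w ∈ blim L) : restrict w q.length = q := by
  obtain ⟨x, hx, hpre, _⟩ := hw q.length
  have h1 : (restrict w q.length).length ≤ q.length := by simp [restrict]
  have h2 := List.prefix_of_prefix_length_le hpre (hq x hx) h1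
  exact h2.eq_of_length (by simp [restrict])

end Aux

/-- a recursive nonterminal whose language is not a prefix chain, sitting in a
self-embedding derivation with an infinite language to its right, has at least two limits. -/

theorem stmt12 (G : ContextFreeGrammar α) (X : G.NT)
    (u1 u2 u3 : List α) (β : List (Symbol α G.NT))
    (hder : G.Derives [Symbol.nonterminal X]
      ((u1.map Symbol.terminal) ++ [Symbol.nonterminal X] ++ (u2.map Symbol.terminal)
        ++ β ++ (u3.map Symbol.terminal)))
    (hβ : {w : List α | G.Derives β (w.map Symbol.terminal)}.Infinite)
    (u v : List α)
    (hu : G.Derives [Symbol.nonterminal X] (u.map Symbol.terminal))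
    (hv : G.Derives [Symbol.nonterminal X] (v.map Symbol.terminal))
    (huv : strictLt u v) :
    ∃ w w' : ℕ → α, w ≠ w' ∧
      w ∈ blim {x : List α | G.Derives [Symbol.nonterminal X] (x.map Symbol.terminal)} ∧
      w' ∈ blim {x : List α | G.Derives [Symbol.nonterminal X] (x.map Symbol.terminal)} := by
  classical
  obtain ⟨s0, y, z, a, b, hab, hueq, hveq⟩ := huv
  set LX : Set (List α) :=
    {x : List α | G.Derives [Symbol.nonterminal X] (x.map Symbol.terminal)} with hLX
  set Lβ : Set (List α) := {w : List α | G.Derives β (w.map Symbol.terminal)} with hLβ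
  have hstep : ∀ s ∈ Lβ, ∀ t ∈ LX, (u1 ++ t ++ u2 ++ s ++ u3) ∈ LX := by
    intro s hs t ht
    have h1 := (ContextFreeGrammar.Derives.append_left
      (ContextFreeGrammar.Derives.append_right ht
        (u2.map Symbol.terminal ++ β ++ u3.map Symbol.terminal)) (u1.map Symbol.terminal))
    have h2 := (ContextFreeGrammar.Derives.append_left
      (ContextFreeGrammar.Derives.append_right hs (u3.map Symbol.terminal))
      (u1.map Symbol.terminal ++ t.map Symbol.terminal ++ u2.map Symbol.terminal))
    show G.Derives _ _
    simp only [List.map_append, List.append_assoc] at h1 h2 ⊢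
    exact hder.trans (by simpa [List.append_assoc] using h1.trans h2)
  have hinj : ∀ t : List α, Set.InjOn (fun s => u1 ++ t ++ u2 ++ s ++ u3) Lβ := by
    intro t s hs s' hs' h
    simp only [List.append_assoc, List.append_cancel_left_eq, List.append_cancel_right_eq] at h
    exact h
  have key : ∀ t ∈ LX, ∃ w ∈ blim LX, restrict w ((u1 ++ t).length) = u1 ++ t := by
    intro t ht
    set Lt : Set (List α) := (fun s => u1 ++ t ++ u2 ++ s ++ u3) '' Lβ with hLt
    have hsub : Lt ⊆ LX := by
      rintro _ ⟨s, hs, rfl⟩; exact hstep s hs t ht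
    obtain ⟨w, hw⟩ := konig' Lt (hβ.image (hinj t))
    refine ⟨w, blim_mono' hsub hw, ?_⟩
    refine blim_prefix' ?_ hw
    rintro _ ⟨s, hs, rfl⟩
    exact ⟨u2 ++ s ++ u3, by simp [List.append_assoc]⟩
  obtain ⟨w, hwb, hwp⟩ := key u hu
  obtain ⟨w', hwb', hwp'⟩ := key v hv
  set m : ℕ := (u1 ++ s0).length with hm
  have hlt : ∀ c : α, ∀ t : List α, m < (u1 ++ (s0 ++ c :: t)).length := by
    intro c t; simp [hm]
  have hget : ∀ (ww : ℕ → α) (c : α) (t : List α),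
      restrict ww (u1 ++ (s0 ++ c :: t)).length = u1 ++ (s0 ++ c :: t) → ww m = c := by
    intro ww c t h
    have := restrict_getD' ww (hlt c t) c
    rw [h] at this
    rw [← this, show u1 ++ (s0 ++ c :: t) = (u1 ++ s0) ++ c :: t by simp,
      List.getD_append_right _ _ _ _ (le_of_eq hm)]
    simp [hm]
  have hwa : w m = a := hget w a y (by rw [hueq] at hwp; exact hwp)
  have hwc : w' m = b := hget w' b z (by rw [hveq] at hwp'; exact hwp')
  exact ⟨w, w', fun h => absurd (hwa ▸ hwc ▸ congrFun h m) (ne_of_lt hab), hwb, hwb'⟩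
end

section
/- Let v be a nonempty word and W an ω-word. Then the set {x : List α | v is not a suffix of x and x·v^ω = W} has at most v.length elements. (This finiteness of fibers is the combinatorial core of the lemma on deciding finiteness of K·v^ω.) -/
variable {α : Type*} [Fintype α] [LinearOrder α] [Nonempty α]

set_option linter.unusedSectionVars false in
lemma eq_restrict {x : List α} {w : ℕ → α} {W : ℕ → α} (h : ocat x w = W) :
    x = restrict W x.length := by
  apply List.ext_get (by simp [restrict])
  intro i h1 h2
  have := congrFun h i
  simp only [ocat, dif_pos h1] at this
  simp [restrict, ← this]

lemma shift (v : List α) (hv : v ≠ []) (x : List α) :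
    ocat (x ++ v) (wpow v hv) = ocat x (wpow v hv) := by
  funext i
  simp only [ocat, wpow, List.length_append]
  rcases lt_or_ge i x.length with h | h
  · rw [dif_pos (show i < x.length + v.length by omega), dif_pos h]
    simp [List.get_eq_getElem, List.getElem_append_left h]
  · rw [dif_neg (show ¬ i < x.length by omega)]
    rcases lt_or_ge i (x.length + v.length) with h2 | h2
    · rw [dif_pos h2]
      have hm : (i - x.length) % v.length = i - x.length := Nat.mod_eq_of_lt (by omega)
      simp [List.get_eq_getElem, List.getElem_append_right h, hm]
    · rw [dif_neg (show ¬ i < x.length + v.length by omega)]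
      have heq : (i - (x.length + v.length)) % v.length = (i - x.length) % v.length := by
        have h3 : i - x.length - v.length = i - (x.length + v.length) := by omega
        rw [← h3, ← Nat.mod_eq_sub_mod (by omega)]
      simp [List.get_eq_getElem, heq]

lemma npow_shift (v : List α) (hv : v ≠ []) (k : ℕ) :
    ∀ x : List α, ocat (x ++ npow v k) (wpow v hv) = ocat x (wpow v hv) := by
  induction k with
  | zero => intro x; simp [npow]
  | succ k ih =>
    intro x
    have : x ++ npow v (k+1) = (x ++ v) ++ npow v k := by
      simp [npow, List.replicate_succ, List.append_assoc]
    rw [this, ih, shift]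

set_option linter.unusedSectionVars false in
lemma npow_length (v : List α) (k : ℕ) : (npow v k).length = k * v.length := by
  induction k with
  | zero => simp [npow]
  | succ k ih =>
    have : npow v (k+1) = v ++ npow v k := by simp [npow, List.replicate_succ]
    simp [this, ih]; ring

lemma key_stmt14 (v : List α) (hv : v ≠ []) (W : ℕ → α) {x y : List α}
    (hx : ¬ v <:+ x ∧ ocat x (wpow v hv) = W) (hy : ¬ v <:+ y ∧ ocat y (wpow v hv) = W)
    (hle : x.length ≤ y.length) (hmod : x.length % v.length = y.length % v.length) :
    x = y := by
  obtain ⟨k, hk⟩ : v.length ∣ y.length - x.length := (Nat.modEq_iff_dvd' hle).mp hmod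
  have hlen : (x ++ npow v k).length = y.length := by
    simp only [List.length_append, npow_length, Nat.mul_comm k, ← hk]; omega
  have h1 : ocat (x ++ npow v k) (wpow v hv) = W := by rw [npow_shift, hx.2]
  have h2 : x ++ npow v k = y := by
    rw [eq_restrict h1, eq_restrict hy.2, hlen]
  cases k with
  | zero => simpa [npow] using h2
  | succ j =>
    exfalso
    apply hy.1
    refine ⟨x ++ npow v j, ?_⟩
    rw [← h2]
    have : npow v (j+1) = npow v j ++ v := by
      simp [npow, List.replicate_succ']
    rw [this, ← List.append_assoc]

/-- for a nonempty word `v` and ω-word `W`, there are at most `v.length`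
words `x` not ending in `v` with `x·v^ω = W`. -/
theorem stmt14 (v : List α) (hv : v ≠ []) (W : ℕ → α) :
    {x : List α | ¬ v <:+ x ∧ ocat x (wpow v hv) = W}.encard ≤ v.length := by
  have hm : 0 < v.length := List.length_pos_iff.mpr hv
  set S := {x : List α | ¬ v <:+ x ∧ ocat x (wpow v hv) = W} with hS
  let f : List α → Fin v.length := fun x => ⟨x.length % v.length, Nat.mod_lt _ hm⟩
  have hinj : Set.InjOn f S := by
    intro x hx y hy hfe
    have hval : x.length % v.length = y.length % v.length := congrArg Fin.val hfe
    rcases le_total x.length y.length with h | h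
    · exact key_stmt14 v hv W hx hy h hval
    · exact (key_stmt14 v hv W hy hx h hval.symm).symm
  calc S.encard = (f '' S).encard := (hinj.encard_image).symm
    _ ≤ (Set.univ : Set (Fin v.length)).encard := Set.encard_mono (Set.subset_univ _)
    _ = v.length := by simp [Set.encard_univ]
end
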